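/- Let f be a polynomial in n variables over ℝ, and evaluate f in the extended dual numbers at the point ((x₁,1,0,…,0), (x₂,0,1,0,…,0), …, (x_n,0,…,0,1)). Then the result equals (f(x), ∂f/∂x₁(x), …, ∂f/∂x_n(x)). -/
import Mathlib


open MvPolynomial TrivSqZeroExt

/-- Correctness of forward-mode automatic differentiation: evaluating a polynomial `f`
in the extended dual numbers (`TrivSqZeroExt ℝ (Fin n → ℝ)`) at the point whose `i`-th
coordinate is `(x i, eᵢ)` yields `(f(x), ∇f(x))`. -/
theorem autodiff_correct (n : ℕ) (f : MvPolynomial (Fin n) ℝ) (x : Fin n → ℝ) :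
    MvPolynomial.aeval
        (fun i => (inl (x i) + inr (Pi.single i 1) : TrivSqZeroExt ℝ (Fin n → ℝ))) f =
      inl (MvPolynomial.eval x f) +
        inr (fun i => MvPolynomial.eval x (MvPolynomial.pderiv i f)) := by
  induction f using MvPolynomial.induction_on with
  | C a =>
      simp only [aeval_C, algebraMap_eq_inl, eval_C, map_zero]
      rw [show (fun i : Fin n => eval x (pderiv i (C a : MvPolynomial (Fin n) ℝ))) = 0 by
        funext i; simp, inr_zero, add_zero]
  | add p q hp hq =>
      simp only [map_add, hp, hq]
      rw [show (fun i => eval x (pderiv i p) + eval x (pderiv i q)) =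
        ((fun i => eval x (pderiv i p)) + fun i => eval x (pderiv i q) : Fin n → ℝ) from rfl,
        inr_add, inl_add]
      abel
  | mul_X p i hp =>
      simp only [map_mul, hp, aeval_X, eval_mul, eval_X]
      rw [add_mul, mul_add, mul_add, inl_mul_inl, inr_mul_inl, inl_mul_inr, inr_mul_inr]
      rw [show (fun j => eval x (pderiv j (p * X i))) =
        ((eval x p) • (Pi.single i 1 : Fin n → ℝ) +
          (MulOpposite.op (x i)) • ((fun j => eval x (pderiv j p)) : Fin n → ℝ)) by
        funext j
        simp [pderiv_mul, pderiv_X, Pi.single_apply, op_smul_eq_smul, mul_comm]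
        split_ifs with h1 h2 h3 <;> simp_all, inr_add]
      abel
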